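/- Let A be a regular subalgebra of a C*-algebra B satisfying the ideal intersection property. Then every B-invariant regular ideal of A is normalizer-invariant; consequently, the regular B-invariant ideals of A are exactly the regular normalizer-invariant ideals of A. -/
import Mathlib


open Pointwise

variable {B : Type*} [NonUnitalCStarAlgebra B]

/-- Closed linear span of a subset of `B`. -/
def clSpan (S : Set B) : Set B := closure (Submodule.span ℂ S : Set B)

/-- `S` is `B`-invariant if `[SB] = [BS]`. -/
def BInvariant (S : Set B) : Prop :=
  clSpan (S * (Set.univ : Set B)) = clSpan ((Set.univ : Set B) * S)

/-- The closed two-sided ideal of `B` generated by `S`, namely `[BSB]`. -/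
def idealGen (S : Set B) : Set B :=
  clSpan ((Set.univ : Set B) * S * (Set.univ : Set B))

/-- Two-sided annihilator of `S` computed in `B`. -/
def annB (S : Set B) : Set B := {x | ∀ s ∈ S, x * s = 0 ∧ s * x = 0}

/-- Two-sided annihilator of `S` computed inside the subset `A ⊆ B`. -/
def annIn (A S : Set B) : Set B := {x ∈ A | ∀ s ∈ S, x * s = 0 ∧ s * x = 0}

/-- A closed *-subalgebra of `B`, regarded as a subset. -/
structure ClosedStarSubalgebra (A : Set B) : Prop where
  isClosed : IsClosed A
  zero_mem : (0 : B) ∈ A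
  add_mem : ∀ ⦃x y : B⦄, x ∈ A → y ∈ A → x + y ∈ A
  smul_mem : ∀ (c : ℂ) ⦃x : B⦄, x ∈ A → c • x ∈ A
  mul_mem : ∀ ⦃x y : B⦄, x ∈ A → y ∈ A → x * y ∈ A
  star_mem : ∀ ⦃x : B⦄, x ∈ A → star x ∈ A

/-- A norm-closed two-sided ideal of `B`. -/
structure ClosedTwoSidedIdeal (J : Set B) : Prop where
  isClosed : IsClosed J
  zero_mem : (0 : B) ∈ J
  add_mem : ∀ ⦃x y : B⦄, x ∈ J → y ∈ J → x + y ∈ J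
  smul_mem : ∀ (c : ℂ) ⦃x : B⦄, x ∈ J → c • x ∈ J
  mul_mem_left : ∀ (a : B) ⦃x : B⦄, x ∈ J → a * x ∈ J
  mul_mem_right : ∀ (a : B) ⦃x : B⦄, x ∈ J → x * a ∈ J

/-- A norm-closed two-sided ideal of the subalgebra `A ⊆ B`. -/
structure IdealOf (A J : Set B) : Prop where
  subset : J ⊆ A
  isClosed : IsClosed J
  zero_mem : (0 : B) ∈ J
  add_mem : ∀ ⦃x y : B⦄, x ∈ J → y ∈ J → x + y ∈ J
  smul_mem : ∀ (c : ℂ) ⦃x : B⦄, x ∈ J → c • x ∈ J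
  mul_mem_left : ∀ ⦃a : B⦄, a ∈ A → ∀ ⦃x : B⦄, x ∈ J → a * x ∈ J
  mul_mem_right : ∀ ⦃a : B⦄, a ∈ A → ∀ ⦃x : B⦄, x ∈ J → x * a ∈ J

/-- The ideal intersection property: every nonzero closed two-sided ideal of `B`
meets `A` nontrivially. -/
def IdealIntersectionProperty (A : Set B) : Prop :=
  ∀ J : Set B, ClosedTwoSidedIdeal J → J ≠ {0} → J ∩ A ≠ {0}

/-- Axiom (inv): `J ∩ A` is `B`-invariant for every closed two-sided ideal `J` of `B`. -/
def AxiomInv (A : Set B) : Prop :=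
  ∀ J : Set B, ClosedTwoSidedIdeal J → BInvariant (J ∩ A)

/-- A regular ideal of `B`. -/
def RegularIdealB (J : Set B) : Prop :=
  ClosedTwoSidedIdeal J ∧ annB (annB J) = J

/-- A regular ideal of the subalgebra `A`. -/
def RegularIdealIn (A I : Set B) : Prop :=
  IdealOf A I ∧ annIn A (annIn A I) = I

/-- A normalizer of `A` in `B`. -/
def IsNormalizer (A : Set B) (n : B) : Prop :=
  (∀ a ∈ A, star n * a * n ∈ A) ∧ (∀ a ∈ A, n * a * star n ∈ A)

/-- `A` contains an approximate unit for `B`. -/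
def ContainsApproxUnit (A : Set B) : Prop :=
  ∃ (ι : Type) (l : Filter ι) (e : ι → B), l.NeBot ∧ (∀ i, e i ∈ A) ∧
    ∀ b : B, Filter.Tendsto (fun i => e i * b) l (nhds b) ∧
      Filter.Tendsto (fun i => b * e i) l (nhds b)

/-- `A` is a regular subalgebra of `B`: the normalizers span a dense subspace of
`B` and `A` contains an approximate unit for `B`. -/
def RegularSubalgebra (A : Set B) : Prop :=
  ClosedStarSubalgebra A ∧ clSpan {n : B | IsNormalizer A n} = Set.univ ∧
    ContainsApproxUnit A


section Stmt17Helpers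

variable {B : Type*} [NonUnitalCStarAlgebra B]

theorem subset_clSpan' (S : Set B) : S ⊆ clSpan S :=
  (Submodule.subset_span (R := ℂ)).trans subset_closure

/-- `clSpan` as a submodule. -/
noncomputable def clSpanSub (S : Set B) : Submodule ℂ B :=
  (Submodule.span ℂ S).topologicalClosure

theorem clSpanSub_coe (S : Set B) : (clSpanSub S : Set B) = clSpan S :=
  Submodule.topologicalClosure_coe _

theorem isClosed_clSpanSub (S : Set B) : IsClosed (clSpanSub S : Set B) :=
  Submodule.isClosed_topologicalClosure _

theorem clSpan_le' {S : Set B} {M : Submodule ℂ B} (hM : IsClosed (M : Set B))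
    (h : S ⊆ M) : clSpan S ⊆ M :=
  closure_minimal (Submodule.span_le.mpr h) hM

theorem mem_of_clSpan {S : Set B} {M : Submodule ℂ B} (hM : IsClosed (M : Set B))
    (f : B →L[ℂ] B) (h : ∀ s ∈ S, f s ∈ M) {x : B} (hx : x ∈ clSpan S) : f x ∈ M := by
  have h1 : (Submodule.span ℂ S : Set B) ⊆ f ⁻¹' (M : Set B) := fun z hz =>
    (Submodule.span_le.mpr (fun s hs => h s hs) : Submodule.span ℂ S ≤
      Submodule.comap (f : B →ₗ[ℂ] B) M) hz
  exact closure_minimal h1 (hM.preimage f.continuous) hx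

noncomputable def mulL (b : B) : B →L[ℂ] B := ContinuousLinearMap.mul ℂ B b

@[simp] theorem mulL_apply (b x : B) : mulL b x = b * x := rfl

noncomputable def mulR (b : B) : B →L[ℂ] B := (ContinuousLinearMap.mul ℂ B).flip b

@[simp] theorem mulR_apply (b x : B) : mulR b x = x * b := rfl

private theorem scalar_bound {c : ℝ} (hc : 0 < c) (t : ℝ) :
    |t * (1 - t ^ 2 / (c + |t|) ^ 2) ^ 2| ≤ c := by
  have hs0 : (0:ℝ) ≤ |t| := abs_nonneg t
  set s := |t| with hs
  have hd : 0 < c + s := by linarith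
  have ht2 : t ^ 2 = s ^ 2 := (sq_abs t).symm
  have h1 : 1 - t ^ 2 / (c + s) ^ 2 = c * (c + 2 * s) / (c + s) ^ 2 := by
    rw [ht2]; field_simp; ring
  rw [h1, abs_mul, ← hs,
    abs_of_nonneg (show (0:ℝ) ≤ (c * (c + 2 * s) / (c + s) ^ 2) ^ 2 by positivity),
    div_pow, ← mul_div_assoc, div_le_iff₀ (by positivity)]
  have key1 : (c + 2 * s) ^ 2 ≤ 4 * (c + s) ^ 2 := by nlinarith [mul_nonneg hc.le hs0, sq_nonneg c]
  have key2 : 4 * (c * s) ≤ (c + s) ^ 2 := by nlinarith [sq_nonneg (c - s)]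
  calc s * (c * (c + 2 * s)) ^ 2 = c ^ 2 * s * (c + 2 * s) ^ 2 := by ring
    _ ≤ c ^ 2 * s * (4 * (c + s) ^ 2) := by
        apply mul_le_mul_of_nonneg_left key1 (by positivity)
    _ = (4 * (c * s)) * (c * (c + s) ^ 2) := by ring
    _ ≤ (c + s) ^ 2 * (c * (c + s) ^ 2) := mul_le_mul_of_nonneg_right key2 (by positivity)
    _ = c * ((c + s) ^ 2) ^ 2 := by ring

private theorem cfc_combo {y : B} (hy : IsSelfAdjoint y) {c : ℝ} (hc : 0 < c) :
    ∃ u v : B, u = v * y ∧ u = y * v ∧ star u = u ∧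
      ‖y - y * u - u * y + u * (y * u)‖ ≤ c := by
  have hgcont : Continuous (fun t : ℝ => t / (c + |t|) ^ 2) := by
    refine continuous_id.div ?_ fun t => by positivity
    exact (continuous_const.add continuous_abs).pow 2
  set g : ℝ → ℝ := fun t => t / (c + |t|) ^ 2 with hgdef
  set f : ℝ → ℝ := fun t => t * g t with hfdef
  have hfcont : Continuous f := continuous_id.mul hgcont
  have hg0 : g 0 = 0 := by simp [hgdef]
  have hf0 : f 0 = 0 := by rw [hfdef]; simp [hg0]
  have hidc : Continuous (fun t : ℝ => t) := continuous_id
  have e1 : cfcₙ (fun t : ℝ => t) y = y := cfcₙ_id' ℝ y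
  have c1 : Continuous (fun t : ℝ => t * f t) := hidc.mul hfcont
  have c2 : Continuous (fun t : ℝ => f t * t) := hfcont.mul hidc
  have c3 : Continuous (fun t : ℝ => f t * (t * f t)) := hfcont.mul c1
  refine ⟨cfcₙ f y, cfcₙ g y, ?_, ?_, ?_, ?_⟩
  · calc cfcₙ f y = cfcₙ (fun t => g t * t) y := cfcₙ_congr fun t _ => mul_comm t (g t)
      _ = cfcₙ g y * cfcₙ (fun t : ℝ => t) y :=
          cfcₙ_mul g _ y hgcont.continuousOn hg0 hidc.continuousOn rfl
      _ = cfcₙ g y * y := by rw [e1]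
  · calc cfcₙ f y = cfcₙ (fun t : ℝ => t) y * cfcₙ g y :=
          cfcₙ_mul _ g y hidc.continuousOn rfl hgcont.continuousOn hg0
      _ = y * cfcₙ g y := by rw [e1]
  · exact (cfcₙ_predicate f y).star_eq
  · have e2 : cfcₙ (fun t : ℝ => t * f t) y = y * cfcₙ f y := by
      rw [cfcₙ_mul (fun t : ℝ => t) f y hidc.continuousOn rfl hfcont.continuousOn hf0, e1]
    have e3 : cfcₙ (fun t : ℝ => f t * t) y = cfcₙ f y * y := by
      rw [cfcₙ_mul f (fun t : ℝ => t) y hfcont.continuousOn hf0 hidc.continuousOn rfl, e1]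
    have e4 : cfcₙ (fun t : ℝ => f t * (t * f t)) y = cfcₙ f y * (y * cfcₙ f y) := by
      rw [cfcₙ_mul f (fun t : ℝ => t * f t) y hfcont.continuousOn hf0 c1.continuousOn
        (by simp [hf0]), e2]
    have e5a : cfcₙ (fun t : ℝ => t - t * f t) y = y - y * cfcₙ f y := by
      rw [cfcₙ_sub (fun t : ℝ => t) (fun t : ℝ => t * f t) y hidc.continuousOn rfl
        c1.continuousOn (by simp [hf0]), e1, e2]
    have e5b : cfcₙ (fun t : ℝ => t - t * f t - f t * t) y
        = y - y * cfcₙ f y - cfcₙ f y * y := by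
      rw [cfcₙ_sub (fun t : ℝ => t - t * f t) (fun t : ℝ => f t * t) y
        (by exact (hidc.sub c1).continuousOn) (by simp [hf0]) c2.continuousOn
        (by simp [hf0]), e5a, e3]
    have e5 : cfcₙ (fun t : ℝ => t - t * f t - f t * t + f t * (t * f t)) y
        = y - y * cfcₙ f y - cfcₙ f y * y + cfcₙ f y * (y * cfcₙ f y) := by
      rw [cfcₙ_add (fun t : ℝ => t - t * f t - f t * t) (fun t : ℝ => f t * (t * f t)) y
        (by exact ((hidc.sub c1).sub c2).continuousOn) (by simp [hf0]) c3.continuousOn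
        (by simp [hf0]), e5b, e4]
    rw [← e5]
    apply norm_cfcₙ_le
    intro t ht
    have hft : f t = t ^ 2 / (c + |t|) ^ 2 := by rw [hfdef]; simp only []; rw [hgdef]; ring
    rw [Real.norm_eq_abs,
      show t - t * f t - f t * t + f t * (t * f t) = t * (1 - f t) ^ 2 from by ring, hft]
    exact scalar_bound hc t

private theorem approx_right (b : B) {ε : ℝ} (hε : 0 < ε) :
    ∃ v : B, ‖b - b * v * (star b * b)‖ < ε := by
  have hc : (0:ℝ) < ε ^ 2 / 2 := by positivity
  obtain ⟨u, v, huv, -, hstar, hnorm⟩ :=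
    cfc_combo (IsSelfAdjoint.star_mul_self b) hc
  refine ⟨v, ?_⟩
  have hbv : b * v * (star b * b) = b * u := by rw [huv, mul_assoc]
  rw [hbv]
  have expand : star (b - b * u) * (b - b * u)
      = star b * b - star b * b * u - u * (star b * b) + u * (star b * b * u) := by
    rw [star_sub, star_mul, hstar]
    noncomm_ring
  have hn2 : ‖b - b * u‖ * ‖b - b * u‖ ≤ ε ^ 2 / 2 := by
    rw [← CStarRing.norm_star_mul_self, expand]
    exact hnorm
  nlinarith [norm_nonneg (b - b * u)]

private theorem approx_left (b : B) {ε : ℝ} (hε : 0 < ε) :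
    ∃ v : B, ‖b - b * star b * v * b‖ < ε := by
  have hc : (0:ℝ) < ε ^ 2 / 2 := by positivity
  obtain ⟨u, v, -, hyv, hstar, hnorm⟩ :=
    cfc_combo (IsSelfAdjoint.mul_star_self b) hc
  refine ⟨v, ?_⟩
  have hbv : b * star b * v * b = u * b := by rw [hyv]
  rw [hbv]
  have expand : (b - u * b) * star (b - u * b)
      = b * star b - b * star b * u - u * (b * star b) + u * (b * star b * u) := by
    rw [star_sub, star_mul, hstar]
    noncomm_ring
  have hn2 : ‖b - u * b‖ * ‖b - u * b‖ ≤ ε ^ 2 / 2 := by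
    rw [← CStarRing.norm_self_mul_star, expand]
    exact hnorm
  nlinarith [norm_nonneg (b - u * b)]

end Stmt17Helpers

/-- If `A` is a regular subalgebra of `B` with the ideal intersection property,
then every `B`-invariant regular ideal of `A` is normalizer-invariant;
consequently the regular `B`-invariant ideals of `A` coincide with the regular
normalizer-invariant ideals of `A`. -/
theorem stmt17 (A : Set B) (hreg : RegularSubalgebra A)
    (hiip : IdealIntersectionProperty A) :
    (∀ I : Set B, RegularIdealIn A I → BInvariant I →
      ∀ n : B, IsNormalizer A n → ∀ x ∈ I, n * x * star n ∈ I) ∧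
    {I : Set B | RegularIdealIn A I ∧ BInvariant I} =
      {I : Set B | RegularIdealIn A I ∧
        ∀ n : B, IsNormalizer A n → ∀ x ∈ I, n * x * star n ∈ I} := by
  obtain ⟨hA, hdense, -⟩ := hreg
  have bot_closed : IsClosed ((⊥ : Submodule ℂ B) : Set B) := by
    rw [Submodule.bot_coe]; exact isClosed_singleton
  have fwd : ∀ I : Set B, RegularIdealIn A I → BInvariant I →
      ∀ n : B, IsNormalizer A n → ∀ x ∈ I, n * x * star n ∈ I := by
    rintro I ⟨hI, hregI⟩ hBinv n hn x hx
    have hmemA : n * x * star n ∈ A := hn.2 x (hI.subset hx)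
    -- membership in clSpan (univ * I)
    have h1 : x * star n ∈ clSpan ((Set.univ : Set B) * I) := by
      rw [← hBinv]
      exact subset_clSpan' _ (Set.mul_mem_mul hx (Set.mem_univ _))
    have h2 : n * x * star n ∈ clSpanSub ((Set.univ : Set B) * I) := by
      rw [mul_assoc]
      have := mem_of_clSpan (M := clSpanSub ((Set.univ : Set B) * I))
        (isClosed_clSpanSub _) (mulL n) ?_ h1
      · simpa using this
      · rintro s ⟨cb, -, z, hz, rfl⟩
        simp only [mulL_apply]
        rw [← mul_assoc]
        have : (n * cb) * z ∈ (Set.univ : Set B) * I :=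
          Set.mul_mem_mul (Set.mem_univ _) hz
        rw [← clSpanSub_coe] at *
        exact subset_clSpan' _ this
    -- membership in clSpan (I * univ)
    have h1' : n * x ∈ clSpan (I * (Set.univ : Set B)) := by
      rw [hBinv]
      exact subset_clSpan' _ (Set.mul_mem_mul (Set.mem_univ _) hx)
    have h3 : n * x * star n ∈ clSpanSub (I * (Set.univ : Set B)) := by
      have := mem_of_clSpan (M := clSpanSub (I * (Set.univ : Set B)))
        (isClosed_clSpanSub _) (mulR (star n)) ?_ h1'
      · simpa using this
      · rintro s ⟨z, hz, cb, -, rfl⟩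
        simp only [mulR_apply]
        rw [mul_assoc]
        have : z * (cb * star n) ∈ I * (Set.univ : Set B) :=
          Set.mul_mem_mul hz (Set.mem_univ _)
        rw [← clSpanSub_coe] at *
        exact subset_clSpan' _ this
    rw [← hregI]
    refine ⟨hmemA, fun d hd => ⟨?_, ?_⟩⟩
    · -- (n * x * star n) * d = 0
      have h0 : (mulR d) (n * x * star n) ∈ (⊥ : Submodule ℂ B) := by
        refine mem_of_clSpan (S := (Set.univ : Set B) * I) bot_closed (mulR d) ?_ ?_
        · rintro s ⟨cb, -, z, hz, rfl⟩
          simp only [mulR_apply]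
          rw [mul_assoc, (hd.2 z hz).2, mul_zero]
          exact Submodule.zero_mem _
        · rw [← clSpanSub_coe]; exact h2
      simpa using (Submodule.mem_bot ℂ).mp h0
    · -- d * (n * x * star n) = 0
      have h0 : (mulL d) (n * x * star n) ∈ (⊥ : Submodule ℂ B) := by
        refine mem_of_clSpan (S := I * (Set.univ : Set B)) bot_closed (mulL d) ?_ ?_
        · rintro s ⟨z, hz, cb, -, rfl⟩
          simp only [mulL_apply]
          rw [← mul_assoc, (hd.2 z hz).1, zero_mul]
          exact Submodule.zero_mem _
        · rw [← clSpanSub_coe]; exact h3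
      simpa using (Submodule.mem_bot ℂ).mp h0
  refine ⟨fwd, ?_⟩
  ext I
  simp only [Set.mem_setOf_eq]
  constructor
  · rintro ⟨h1, h2⟩
    exact ⟨h1, fwd I h1 h2⟩
  · rintro ⟨h1, h2⟩
    refine ⟨h1, ?_⟩
    obtain ⟨hI, -⟩ := h1
    -- every x * n lies in clSpan (univ * I)
    have hxn : ∀ x ∈ I, ∀ n : B, IsNormalizer A n →
        x * n ∈ clSpan ((Set.univ : Set B) * I) := by
      intro x hx n hn
      have hns : IsNormalizer A (star n) :=
        ⟨fun a ha => by simpa [star_star] using hn.2 a ha,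
         fun a ha => by simpa [star_star] using hn.1 a ha⟩
      have hyI : star (x * n) * (x * n) ∈ I := by
        have hxx : star x * x ∈ I := hI.mul_mem_left (hA.star_mem (hI.subset hx)) hx
        have h := h2 (star n) hns (star x * x) hxx
        rw [star_star] at h
        have heq : star (x * n) * (x * n) = star n * (star x * x) * n := by
          simp [star_mul, mul_assoc]
        rwa [heq]
      have hclosed : IsClosed (clSpan ((Set.univ : Set B) * I)) := isClosed_closure
      rw [← hclosed.closure_eq, Metric.mem_closure_iff]
      intro ε hε
      obtain ⟨v, hv⟩ := approx_right (x * n) hε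
      refine ⟨x * n * v * (star (x * n) * (x * n)), ?_, ?_⟩
      · exact subset_clSpan' _ (Set.mul_mem_mul (Set.mem_univ (x * n * v)) hyI)
      · rwa [dist_eq_norm]
    -- every n * x lies in clSpan (I * univ)
    have hnx : ∀ x ∈ I, ∀ n : B, IsNormalizer A n →
        n * x ∈ clSpan (I * (Set.univ : Set B)) := by
      intro x hx n hn
      have hyI : (n * x) * star (n * x) ∈ I := by
        have hxx : x * star x ∈ I := hI.mul_mem_right (hA.star_mem (hI.subset hx)) hx
        have h := h2 n hn (x * star x) hxx
        have heq : (n * x) * star (n * x) = n * (x * star x) * star n := by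
          simp [star_mul, mul_assoc]
        rwa [heq]
      have hclosed : IsClosed (clSpan (I * (Set.univ : Set B))) := isClosed_closure
      rw [← hclosed.closure_eq, Metric.mem_closure_iff]
      intro ε hε
      obtain ⟨v, hv⟩ := approx_left (n * x) hε
      refine ⟨n * x * star (n * x) * v * (n * x), ?_, ?_⟩
      · have hmm : (n * x * star (n * x)) * (v * (n * x)) ∈ I * (Set.univ : Set B) :=
          Set.mul_mem_mul hyI (Set.mem_univ _)
        have : n * x * star (n * x) * v * (n * x)
            = (n * x * star (n * x)) * (v * (n * x)) := by rw [mul_assoc]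
        rw [this]
        exact subset_clSpan' _ hmm
      · rwa [dist_eq_norm]
    -- conclude B-invariance
    apply Set.Subset.antisymm
    · have hsub : clSpan (I * (Set.univ : Set B))
          ⊆ (clSpanSub ((Set.univ : Set B) * I) : Set B) := by
        apply clSpan_le' (isClosed_clSpanSub _)
        rintro - ⟨x, hx, b, -, rfl⟩
        have hb : b ∈ clSpan {n : B | IsNormalizer A n} := by
          rw [hdense]; trivial
        have := mem_of_clSpan (isClosed_clSpanSub _) (mulL x)
          (fun n hn => by
            rw [mulL_apply, ← clSpanSub_coe] at *
            exact hxn x hx n hn) hb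
        simpa using this
      rwa [clSpanSub_coe] at hsub
    · have hsub : clSpan ((Set.univ : Set B) * I)
          ⊆ (clSpanSub (I * (Set.univ : Set B)) : Set B) := by
        apply clSpan_le' (isClosed_clSpanSub _)
        rintro - ⟨b, -, x, hx, rfl⟩
        have hb : b ∈ clSpan {n : B | IsNormalizer A n} := by
          rw [hdense]; trivial
        have := mem_of_clSpan (isClosed_clSpanSub _) (mulR x)
          (fun n hn => by
            rw [mulR_apply, ← clSpanSub_coe] at *
            exact hnx x hx n hn) hb
        simpa using this
      rwa [clSpanSub_coe] at hsub
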